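/- arXiv:2002.04714 — 2 statements merged into one kernel-verified Lean document; each statement's English description precedes it below -/
import Mathlib

section
/- For all real x > 0 and y in (0,1), the function f(x,y) = (coth(x) - y coth(xy)) / ((xy coth(xy) - 1)(x coth(x) - 1)) + 4(1 - y^{-2}) / (sinh(2x) - 2x) is strictly positive. -/
/-!
Write `A t = t coth t - 1` and `K = 4 x³ / (sinh 2x - 2x)`. The expression equals
`(φ_K (x y) - φ_K x) / x` with `φ_K t = 1 / A t - K / t²`, so it suffices that `φ_K` is strictly
decreasing on `(0, ∞)`. This holds as soon as `K ≤ 3` (which follows from `sinh u > u + u³/6`),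
because then the sign of `φ_K'` is governed by the inequality
`6 (t cosh t - sinh t)² < t³ (sinh t cosh t - t)`.
-/

noncomputable def coth (x : ℝ) : ℝ := Real.cosh x / Real.sinh x

open Real Set

theorem pos_of_hasDerivAt_pos {f f' : ℝ → ℝ} (hf : ∀ t, HasDerivAt f (f' t) t) (h₀ : f 0 = 0)
    (hf' : ∀ t, 0 < t → 0 < f' t) : ∀ t, 0 < t → 0 < f t := by
  intro t ht
  have hmono : StrictMonoOn f (Ici 0) :=
    strictMonoOn_of_hasDerivWithinAt_pos (convex_Ici 0)
      (fun u _ => (hf u).continuousAt.continuousWithinAt) (fun u _ => (hf u).hasDerivWithinAt)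
      (fun u hu => hf' u (by simpa using hu))
  simpa [h₀] using hmono self_mem_Ici ht.le ht

theorem hasDerivAt_mul_cosh_sub_sinh (t : ℝ) :
    HasDerivAt (fun u => u * cosh u - sinh u) (t * sinh t) t :=
  (((hasDerivAt_id' t).fun_mul (hasDerivAt_cosh t)).fun_sub (hasDerivAt_sinh t)).congr_deriv
    (by ring)

theorem mul_cosh_sub_sinh_pos {t : ℝ} (ht : 0 < t) : 0 < t * cosh t - sinh t :=
  pos_of_hasDerivAt_pos hasDerivAt_mul_cosh_sub_sinh (by simp)
    (fun u hu => mul_pos hu (sinh_pos_iff.2 hu)) t ht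

theorem add_cube_div_six_lt_sinh {t : ℝ} (ht : 0 < t) : t + t ^ 3 / 6 < sinh t := by
  have h := sum_le_hasSum (Finset.range 3) (fun n _ => by positivity) (hasSum_sinh t)
  simp only [Finset.sum_range_succ, Finset.sum_range_zero] at h
  norm_num [Nat.factorial] at h
  nlinarith [pow_pos ht 5]

/-- In the variable `u = 2 t`, sixteen times the difference of the two sides has Taylor series
`∑_{m ≥ 10 even} (m - 1) (m - 6) (m - 8) u ^ m / m!`; instead of summing it, the proof
differentiates five times down to `u (u cosh u - sinh u)`. -/
theorem six_mul_sq_mul_cosh_sub_sinh_lt {t : ℝ} (ht : 0 < t) :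
    6 * (t * cosh t - sinh t) ^ 2 < t ^ 3 * (sinh t * cosh t - t) := by
  have h₄ : ∀ u : ℝ, 0 < u → 0 < u ^ 2 * sinh u - 3 * u * cosh u + 3 * sinh u :=
    pos_of_hasDerivAt_pos (f' := fun u => u * (u * cosh u - sinh u))
      (fun u =>
        ((((hasDerivAt_pow 2 u).mul (hasDerivAt_sinh u)).sub
          (((hasDerivAt_id' u).const_mul 3).mul (hasDerivAt_cosh u))).add
          ((hasDerivAt_sinh u).const_mul 3)).congr_deriv (by ring))
      (by simp) (fun u hu => mul_pos hu (mul_cosh_sub_sinh_pos hu))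
  have h₃ : ∀ u : ℝ, 0 < u → 0 < u ^ 2 * cosh u - 5 * u * sinh u + 8 * cosh u - 8 :=
    pos_of_hasDerivAt_pos (f' := fun u => u ^ 2 * sinh u - 3 * u * cosh u + 3 * sinh u)
      (fun u =>
        (((((hasDerivAt_pow 2 u).mul (hasDerivAt_cosh u)).sub
          (((hasDerivAt_id' u).const_mul 5).mul (hasDerivAt_sinh u))).add
          ((hasDerivAt_cosh u).const_mul 8)).sub_const 8).congr_deriv (by ring))
      (by simp) h₄
  have h₂ : ∀ u : ℝ, 0 < u → 0 < u ^ 2 * sinh u - 7 * u * cosh u + 15 * sinh u - 8 * u :=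
    pos_of_hasDerivAt_pos (f' := fun u => u ^ 2 * cosh u - 5 * u * sinh u + 8 * cosh u - 8)
      (fun u =>
        (((((hasDerivAt_pow 2 u).mul (hasDerivAt_sinh u)).sub
          (((hasDerivAt_id' u).const_mul 7).mul (hasDerivAt_cosh u))).add
          ((hasDerivAt_sinh u).const_mul 15)).sub
          ((hasDerivAt_id' u).const_mul 8)).congr_deriv (by ring))
      (by simp) h₃
  have h₁ : ∀ u : ℝ, 0 < u →
      0 < u ^ 2 * cosh u - 9 * u * sinh u + 24 * cosh u - 24 - 4 * u ^ 2 :=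
    pos_of_hasDerivAt_pos
      (f' := fun u => u ^ 2 * sinh u - 7 * u * cosh u + 15 * sinh u - 8 * u)
      (fun u =>
        ((((((hasDerivAt_pow 2 u).mul (hasDerivAt_cosh u)).sub
          (((hasDerivAt_id' u).const_mul 9).mul (hasDerivAt_sinh u))).add
          ((hasDerivAt_cosh u).const_mul 24)).sub_const 24).sub
          ((hasDerivAt_pow 2 u).const_mul 4)).congr_deriv (by ring))
      (by simp) h₂
  have h₀ : 0 < (2 * t) ^ 3 * sinh (2 * t) - (2 * t) ^ 4 - 12 * (2 * t) ^ 2 * (cosh (2 * t) + 1)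
      + 48 * (2 * t) * sinh (2 * t) - 48 * cosh (2 * t) + 48 :=
    pos_of_hasDerivAt_pos
      (f' := fun u => u * (u ^ 2 * cosh u - 9 * u * sinh u + 24 * cosh u - 24 - 4 * u ^ 2))
      (fun u =>
        ((((((((hasDerivAt_pow 3 u).mul (hasDerivAt_sinh u)).sub (hasDerivAt_pow 4 u)).sub
          (((hasDerivAt_pow 2 u).const_mul 12).mul ((hasDerivAt_cosh u).add_const 1))).add
          (((hasDerivAt_id' u).const_mul 48).mul (hasDerivAt_sinh u))).sub
          ((hasDerivAt_cosh u).const_mul 48)).add_const 48)).congr_deriv (by ring))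
      (by simp) (fun u hu => mul_pos hu (h₁ u hu)) (2 * t) (by positivity)
  rw [sinh_two_mul, cosh_two_mul] at h₀
  nlinarith [cosh_sq t]

noncomputable def phi (K t : ℝ) : ℝ := sinh t / (t * cosh t - sinh t) - K / t ^ 2

theorem hasDerivAt_phi (K : ℝ) {t : ℝ} (ht : 0 < t) :
    HasDerivAt (phi K)
      ((t - sinh t * cosh t) / (t * cosh t - sinh t) ^ 2 + 2 * K / t ^ 3) t := by
  have hD := (mul_cosh_sub_sinh_pos ht).ne'
  refine (((hasDerivAt_sinh t).fun_div (hasDerivAt_mul_cosh_sub_sinh t) hD).fun_sub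
    ((hasDerivAt_const t K).div (hasDerivAt_pow 2 t) (pow_ne_zero 2 ht.ne'))).congr_deriv ?_
  rw [show cosh t * (t * cosh t - sinh t) - sinh t * (t * sinh t) = t - sinh t * cosh t by
    linear_combination t * cosh_sq_sub_sinh_sq t]
  field_simp
  ring

theorem strictAntiOn_phi {K : ℝ} (hK : K ≤ 3) : StrictAntiOn (phi K) (Ioi 0) := by
  refine strictAntiOn_of_hasDerivWithinAt_neg (convex_Ioi 0)
    (fun t ht => (hasDerivAt_phi K ht).continuousAt.continuousWithinAt)
    (fun t ht => (hasDerivAt_phi K (interior_subset ht)).hasDerivWithinAt) fun t ht => ?_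
  rw [interior_Ioi, mem_Ioi] at ht
  have hD := mul_cosh_sub_sinh_pos ht
  have key := six_mul_sq_mul_cosh_sub_sinh_lt ht
  rw [div_add_div _ _ (by positivity) (by positivity)]
  refine div_neg_of_neg_of_pos ?_ (by positivity)
  nlinarith [mul_le_mul_of_nonneg_left hK (by positivity : 0 ≤ 2 * (t * cosh t - sinh t) ^ 2)]

theorem inv_mul_coth_sub_one {t : ℝ} (ht : 0 < t) :
    (t * coth t - 1)⁻¹ = sinh t / (t * cosh t - sinh t) := by
  have := (sinh_pos_iff.2 ht).ne'
  rw [coth, mul_div_assoc', div_sub_one this, inv_div]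

theorem mul_coth_sub_one_pos {t : ℝ} (ht : 0 < t) : 0 < t * coth t - 1 := by
  rw [← inv_pos, inv_mul_coth_sub_one ht]
  exact div_pos (sinh_pos_iff.2 ht) (mul_cosh_sub_sinh_pos ht)

theorem phi_eq {K t : ℝ} (ht : 0 < t) : phi K t = (t * coth t - 1)⁻¹ - K / t ^ 2 := by
  rw [phi, inv_mul_coth_sub_one ht]

theorem coth_expr_eq_div_phi_sub_phi {x y : ℝ} (hx : 0 < x) (hy : 0 < y) :
    (coth x - y * coth (x * y)) / ((x * y * coth (x * y) - 1) * (x * coth x - 1)) +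
      4 * (1 - y⁻¹ ^ 2) / (sinh (2 * x) - 2 * x) =
      (phi (4 * x ^ 3 / (sinh (2 * x) - 2 * x)) (x * y) -
        phi (4 * x ^ 3 / (sinh (2 * x) - 2 * x)) x) / x := by
  have ha := (mul_coth_sub_one_pos hx).ne'
  have hb := (mul_coth_sub_one_pos (mul_pos hx hy)).ne'
  have hcoth :
      coth x - y * coth (x * y) = ((x * coth x - 1) - (x * y * coth (x * y) - 1)) / x := by
    field_simp
    ring
  rw [phi_eq hx, phi_eq (mul_pos hx hy), hcoth]
  generalize x * coth x - 1 = a at *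
  generalize x * y * coth (x * y) - 1 = b at *
  field_simp
  ring

theorem stmt_7 (x y : ℝ) (hx : 0 < x) (hy0 : 0 < y) (hy1 : y < 1) :
    (coth x - y * coth (x * y)) / ((x * y * coth (x * y) - 1) * (x * coth x - 1)) +
      4 * (1 - y⁻¹ ^ 2) / (Real.sinh (2 * x) - 2 * x) > 0 := by
  have hxy : 0 < x * y := mul_pos hx hy0
  have hD : 4 * x ^ 3 / 3 < sinh (2 * x) - 2 * x := by
    nlinarith [add_cube_div_six_lt_sinh (by linarith : 0 < 2 * x)]
  have hK : 4 * x ^ 3 / (sinh (2 * x) - 2 * x) ≤ 3 := by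
    rw [div_le_iff₀ (by linarith [pow_pos hx 3])]; linarith
  rw [coth_expr_eq_div_phi_sub_phi hx hy0, gt_iff_lt]
  exact div_pos (sub_pos.2 (strictAntiOn_phi hK hxy hx (mul_lt_of_lt_one_right hx hy1))) hx
end

section
/- Let x > 0 and 0 < β < 1 be reals, and write ψ(a) = a coth(a) - 1 and φ(a) = sinh(a) - a. Then ψ(x√β) ψ(x) < (β/(4(1-β))) · ((ψ(x) - ψ(x√β))/x) · φ(2x). -/
noncomputable def ψ (a : ℝ) : ℝ := a * coth a - 1

noncomputable def φ (a : ℝ) : ℝ := Real.sinh a - a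

/-!
Put `y = x √β`, so that `β / (1 - β) = y² / (x² - y²)`. The inequality is the product of three
estimates: `ψ y < y² / 3`, `8 x² ψ x ≤ 3 φ(2x) ψ'(x)`, and `(x² - y²) ψ'(x) ≤ 2x (ψ x - ψ y)`. The
last one follows by integrating `ψ'(t) = t · (ψ'(t) / t)` over `[y, x]`, because `ψ'(t) / t` is
decreasing. The hyperbolic inequalities behind the first two estimates and behind this monotonicity
are polynomial in `a` and `u = exp a`; writing `u² = exp (2a)` as its Taylor polynomial of degree 5
plus a remainder `t ≥ 0` turns each into a polynomial in `a, t ≥ 0` with (essentially) nonnegative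
coefficients.
-/

open Real Set

lemma ψ_eq_div {a : ℝ} (ha : a ≠ 0) : ψ a = (a * cosh a - sinh a) / sinh a := by
  have : sinh a ≠ 0 := sinh_ne_zero.mpr ha
  rw [ψ, coth]
  field_simp

lemma φ_two_mul (x : ℝ) : φ (2 * x) = 2 * (sinh x * cosh x - x) := by
  rw [φ, sinh_two_mul]
  ring

noncomputable def ψ' (t : ℝ) : ℝ := (sinh t * cosh t - t) / sinh t ^ 2

lemma hasDerivAt_ψ {t : ℝ} (ht : t ≠ 0) : HasDerivAt ψ (ψ' t) t := by
  have hs : sinh t ≠ 0 := sinh_ne_zero.mpr ht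
  have h : HasDerivAt (fun a ↦ a * (cosh a / sinh a) - 1)
      (1 * (cosh t / sinh t) + t * ((sinh t * sinh t - cosh t * cosh t) / sinh t ^ 2)) t :=
    ((hasDerivAt_id' t).mul ((hasDerivAt_cosh t).div (hasDerivAt_sinh t) hs)).sub_const 1
  refine h.congr_deriv ?_
  rw [ψ']
  field_simp
  linear_combination (-t) * cosh_sq t

lemma sinh_lt_mul_cosh {x : ℝ} (hx : 0 < x) : sinh x < x * cosh x := by
  have hderiv (t : ℝ) : HasDerivAt (fun t ↦ t * cosh t - sinh t) (t * sinh t) t := by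
    refine (((hasDerivAt_id' t).mul (hasDerivAt_cosh t)).sub (hasDerivAt_sinh t)).congr_deriv ?_
    ring
  have hmono : StrictMonoOn (fun t ↦ t * cosh t - sinh t) (Ici 0) := by
    refine strictMonoOn_of_hasDerivWithinAt_pos (convex_Ici 0)
      (fun t _ ↦ (hderiv t).continuousAt.continuousWithinAt)
      (fun t _ ↦ (hderiv t).hasDerivWithinAt) fun t ht ↦ ?_
    rw [interior_Ici] at ht
    exact mul_pos ht (sinh_pos_iff.mpr ht)
  simpa using hmono self_mem_Ici hx.le hx

lemma ψ_pos {x : ℝ} (hx : 0 < x) : 0 < ψ x := by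
  rw [ψ_eq_div hx.ne']
  exact div_pos (sub_pos.mpr (sinh_lt_mul_cosh hx)) (sinh_pos_iff.mpr hx)

lemma sinh_eq_exp_sq (a : ℝ) : sinh a = (exp a ^ 2 - 1) / (2 * exp a) := by
  rw [sinh_eq, exp_neg]
  field_simp

lemma cosh_eq_exp_sq (a : ℝ) : cosh a = (exp a ^ 2 + 1) / (2 * exp a) := by
  rw [cosh_eq, exp_neg]
  field_simp

lemma exists_exp_sq_eq_taylor_add {a : ℝ} (ha : 0 ≤ a) : ∃ t ≥ 0,
    exp a ^ 2 = 1 + 2 * a + 2 * a ^ 2 + 4 / 3 * a ^ 3 + 2 / 3 * a ^ 4 + 4 / 15 * a ^ 5 + t := by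
  have h := sum_le_exp_of_nonneg (by positivity : 0 ≤ 2 * a) 6
  norm_num [Finset.sum_range_succ, Nat.factorial] at h
  refine ⟨_, sub_nonneg.mpr h, ?_⟩
  rw [← exp_nat_mul]
  push_cast
  ring

lemma two_mul_sq_mul_cosh_le {a : ℝ} (ha : 0 ≤ a) :
    2 * a ^ 2 * cosh a ≤ sinh a ^ 2 * cosh a + a * sinh a := by
  obtain ⟨t, ht, hu⟩ := exists_exp_sq_eq_taylor_add ha
  rw [sinh_eq_exp_sq, cosh_eq_exp_sq]
  field_simp
  rw [hu, ← sub_nonneg]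
  -- the only negative coefficient, that of `a ^ 2 * t ^ 2`, is absorbed by `a * (2 * a - 1) ^ 2 * t ^ 2`
  refine (mul_nonneg (mul_nonneg ha (sq_nonneg (2 * a - 1))) (sq_nonneg t)).trans ?_
  rw [← sub_nonneg]
  ring_nf
  positivity

lemma ψ_lt_sq_div_three {y : ℝ} (hy : 0 < y) : ψ y < y ^ 2 / 3 := by
  have hs : 0 < sinh y := sinh_pos_iff.mpr hy
  rw [ψ_eq_div hy.ne', div_lt_div_iff₀ hs three_pos]
  obtain ⟨t, ht, hu⟩ := exists_exp_sq_eq_taylor_add hy.le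
  rw [sinh_eq_exp_sq, cosh_eq_exp_sq]
  field_simp
  rw [hu]
  linarith [mul_nonneg ht (sq_nonneg (y - 3 / 2)), mul_nonneg (pow_pos hy 5).le (sq_nonneg (y - 1 / 2)),
    pow_pos hy 5, pow_pos hy 7]

lemma eight_mul_sq_mul_ψ_le {x : ℝ} (hx : 0 < x) : 8 * x ^ 2 * ψ x ≤ 3 * φ (2 * x) * ψ' x := by
  have hs : 0 < sinh x := sinh_pos_iff.mpr hx
  have key : 8 * x ^ 2 * sinh x * (x * cosh x - sinh x) ≤ 6 * (sinh x * cosh x - x) ^ 2 := by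
    obtain ⟨t, ht, hu⟩ := exists_exp_sq_eq_taylor_add hx.le
    rw [sinh_eq_exp_sq, cosh_eq_exp_sq]
    field_simp
    rw [hu, ← sub_nonneg]
    ring_nf
    positivity
  calc 8 * x ^ 2 * ψ x = 8 * x ^ 2 * sinh x * (x * cosh x - sinh x) / sinh x ^ 2 := by
        rw [ψ_eq_div hx.ne']
        field_simp
    _ ≤ 6 * (sinh x * cosh x - x) ^ 2 / sinh x ^ 2 := by gcongr
    _ = 3 * φ (2 * x) * ψ' x := by
        rw [φ_two_mul, ψ']
        ring

lemma hasDerivAt_ψ'_div {t : ℝ} (ht : t ≠ 0) :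
    HasDerivAt (fun t ↦ ψ' t / t)
      (-(sinh t * (sinh t ^ 2 * cosh t + t * sinh t - 2 * t ^ 2 * cosh t)) / (sinh t ^ 2 * t) ^ 2)
      t := by
  have hden : sinh t ^ 2 * t ≠ 0 := by
    have := sinh_ne_zero.mpr ht
    positivity
  have h := (((hasDerivAt_sinh t).mul (hasDerivAt_cosh t)).sub (hasDerivAt_id' t)).div
    (((hasDerivAt_sinh t).pow 2).mul (hasDerivAt_id' t)) hden
  simp only [ψ', div_div]
  refine h.congr_deriv ?_
  simp only [Pi.mul_apply, Pi.sub_apply, Pi.pow_apply]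
  congr 1
  linear_combination (-(t * sinh t ^ 2)) * cosh_sq t

lemma antitoneOn_ψ'_div : AntitoneOn (fun t ↦ ψ' t / t) (Ioi 0) := by
  refine antitoneOn_of_hasDerivWithinAt_nonpos (convex_Ioi 0)
    (fun t ht ↦ (hasDerivAt_ψ'_div ht.ne').continuousAt.continuousWithinAt)
    (fun t ht ↦ (hasDerivAt_ψ'_div (interior_subset ht).ne').hasDerivWithinAt)
    fun t ht ↦ ?_
  rw [interior_Ioi] at ht
  have hs : 0 < sinh t := sinh_pos_iff.mpr ht
  have := two_mul_sq_mul_cosh_le ht.le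
  exact div_nonpos_of_nonpos_of_nonneg
    (neg_nonpos.mpr (mul_nonneg hs.le (by linarith))) (sq_nonneg _)

lemma sq_sub_sq_mul_ψ'_le {x y : ℝ} (hy : 0 < y) (hyx : y ≤ x) :
    (x ^ 2 - y ^ 2) * ψ' x ≤ 2 * x * (ψ x - ψ y) := by
  have hx : 0 < x := hy.trans_le hyx
  set k := ψ' x / x
  have hderiv {t : ℝ} (ht : 0 < t) :
      HasDerivAt (fun t ↦ ψ t - t ^ 2 * k / 2) (ψ' t - t * k) t := by
    refine ((hasDerivAt_ψ ht.ne').sub (((hasDerivAt_pow 2 t).mul_const k).div_const 2)).congr_deriv ?_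
    ring
  have hmono : MonotoneOn (fun t ↦ ψ t - t ^ 2 * k / 2) (Icc y x) := by
    refine monotoneOn_of_hasDerivWithinAt_nonneg (convex_Icc y x)
      (fun t ht ↦ (hderiv (hy.trans_le ht.1)).continuousAt.continuousWithinAt)
      (fun t ht ↦ (hderiv (hy.trans_le (interior_subset ht).1)).hasDerivWithinAt) fun t ht ↦ ?_
    rw [interior_Icc] at ht
    have ht0 : 0 < t := hy.trans ht.1
    have hk : k ≤ ψ' t / t := antitoneOn_ψ'_div ht0 hx ht.2.le
    have := mul_le_mul_of_nonneg_left hk ht0.le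
    rw [mul_div_cancel₀ _ ht0.ne'] at this
    linarith
  have h := hmono ⟨le_rfl, hyx⟩ ⟨hyx, le_rfl⟩ hyx
  have hk : ψ' x = k * x := (div_mul_cancel₀ _ hx.ne').symm
  rw [hk]
  linarith [mul_le_mul_of_nonneg_left h (by positivity : 0 ≤ 2 * x)]

theorem stmt_11 (x β : ℝ) (hx : 0 < x) (hβ0 : 0 < β) (hβ1 : β < 1) :
    ψ (x * Real.sqrt β) * ψ x <
      (β / (4 * (1 - β))) * ((ψ x - ψ (x * Real.sqrt β)) / x) * φ (2 * x) := by
  set y := x * √β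
  have hy : 0 < y := by positivity
  have hy2 : y ^ 2 = β * x ^ 2 := by rw [mul_pow, sq_sqrt hβ0.le]; ring
  have hyx : y < x := mul_lt_of_lt_one_right hx ((sqrt_lt' one_pos).mpr (by simpa using hβ1))
  have hφ : 0 < φ (2 * x) := by rw [φ, sub_pos]; exact self_lt_sinh_iff.mpr (by positivity)
  have hx2 : 0 < x ^ 2 - y ^ 2 := by nlinarith
  calc ψ y * ψ x < y ^ 2 / 3 * ψ x := mul_lt_mul_of_pos_right (ψ_lt_sq_div_three hy) (ψ_pos hx)
    _ ≤ y ^ 2 / 3 * (3 * φ (2 * x) * ψ' x / (8 * x ^ 2)) := by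
        gcongr
        rw [le_div_iff₀ (by positivity)]
        linarith [eight_mul_sq_mul_ψ_le hx]
    _ ≤ y ^ 2 / 3 * (3 * φ (2 * x) * (2 * x * (ψ x - ψ y) / (x ^ 2 - y ^ 2)) / (8 * x ^ 2)) := by
        gcongr
        rw [le_div_iff₀ hx2, mul_comm]
        exact sq_sub_sq_mul_ψ'_le hy hyx.le
    _ = β / (4 * (1 - β)) * ((ψ x - ψ y) / x) * φ (2 * x) := by
        have : 1 - β ≠ 0 := by linarith
        rw [hy2, ← one_sub_mul]
        field_simp
        ring
end
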